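/- arXiv:1605.02873 — 4 statements merged into one kernel-verified Lean document; each statement's English description precedes it below -/
import Mathlib

section
/- Suppose 𝔰 has a canonical basis X_2, …, X_d, and write d_{i,j,k} := (X_i)_{j,k} for indices 2 ≤ i,j,k ≤ d. Let λ_2, …, λ_d ∈ ℝ and Y = diag(1, λ_2, …, λ_d). Then YX − XY ∈ 𝔰 holds for all X ∈ 𝔰 if and only if the numbers μ_i := λ_i − 1 (i = 2,…,d) satisfy μ_i + μ_j = μ_k for every triple (i,j,k) ∈ {2,…,d}³ with d_{i,j,k} ≠ 0. -/
open Matrix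

/-- Let `X_2, …, X_d` be a canonical basis of `𝔰`, with entries
`d_{i,j,k} = (X_i)_{j,k}`, and let `Y = diag(1, λ_2, …, λ_d)`.  Then `YX - XY ∈ 𝔰` holds
for all `X ∈ 𝔰` if and only if the numbers `μ_i = λ_i - 1` satisfy `μ_i + μ_j = μ_k` for
every triple `(i,j,k)` (with `i,j,k ∈ {2,…,d}`) such that `d_{i,j,k} ≠ 0`. -/
theorem statement2 (d : ℕ) [NeZero d] (hd : 2 ≤ d)
    (𝔰 : Submodule ℝ (Matrix (Fin d) (Fin d) ℝ))
    (hupper : ∀ X ∈ 𝔰, ∀ j k : Fin d, k ≤ j → X j k = 0)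
    (hmulclosed : ∀ X ∈ 𝔰, ∀ Y ∈ 𝔰, X * Y ∈ 𝔰)
    (X : Fin d → Matrix (Fin d) (Fin d) ℝ)
    (hXmem : ∀ i : Fin d, i ≠ 0 → X i ∈ 𝔰)
    (hXrow : ∀ i : Fin d, i ≠ 0 → ∀ k : Fin d, X i 0 k = if k = i then 1 else 0)
    (hXspan : ∀ Z ∈ 𝔰, ∃ c : Fin d → ℝ, Z = ∑ i ∈ Finset.univ.erase 0, c i • X i)
    (hXindep : LinearIndependent ℝ (fun i : {i : Fin d // i ≠ 0} => X i.1))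
    (lam : Fin d → ℝ) (hlam0 : lam 0 = 1) :
    (∀ Z ∈ 𝔰, Matrix.diagonal lam * Z - Z * Matrix.diagonal lam ∈ 𝔰) ↔
    (∀ i j k : Fin d, i ≠ 0 → j ≠ 0 → k ≠ 0 → X i j k ≠ 0 →
      (lam i - 1) + (lam j - 1) = lam k - 1) := by
  have hchar : ∀ Z ∈ 𝔰, Z = ∑ i ∈ Finset.univ.erase 0, (Z 0 i) • X i := by
    intro Z hZ
    obtain ⟨c, hc⟩ := hXspan Z hZ
    have hcoef : ∀ k ∈ Finset.univ.erase (0 : Fin d), (Z 0 k) • X k = c k • X k := by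
      intro k hk
      have hk0 : k ≠ 0 := Finset.ne_of_mem_erase hk
      have hzk : Z 0 k = c k := by
        have h1 := congrFun (congrFun hc 0) k
        rw [Matrix.sum_apply] at h1
        rw [h1]
        rw [Finset.sum_congr rfl (fun i hi => by
          rw [Matrix.smul_apply, hXrow i (Finset.ne_of_mem_erase hi) k, smul_eq_mul,
            mul_ite, mul_one, mul_zero])]
        rw [Finset.sum_ite_eq]
        simp [hk]
      rw [hzk]
    rw [Finset.sum_congr rfl hcoef, ← hc]
  constructor
  · intro hL i j k hi hj hk hx
    have hW : Matrix.diagonal lam * X i - X i * Matrix.diagonal lam ∈ 𝔰 :=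
      hL _ (hXmem i hi)
    have hWe := hchar _ hW
    have hkey : Matrix.diagonal lam * X i - X i * Matrix.diagonal lam
        = (1 - lam i) • X i := by
      rw [hWe]
      rw [Finset.sum_congr rfl (fun l hl => by
        have hl0 : l ≠ 0 := Finset.ne_of_mem_erase hl
        have hrow : (Matrix.diagonal lam * X i - X i * Matrix.diagonal lam) 0 l
            = if l = i then 1 - lam i else 0 := by
          rw [Matrix.sub_apply, Matrix.diagonal_mul, Matrix.mul_diagonal,
            hXrow i hi l, hlam0]
          split_ifs with h
          · subst h; ring
          · ring
        rw [hrow, ite_smul, zero_smul])]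
      rw [Finset.sum_ite_eq']
      simp [Finset.mem_erase, hi]
    have h2 := congrFun (congrFun hkey j) k
    rw [Matrix.sub_apply, Matrix.diagonal_mul, Matrix.mul_diagonal,
      Matrix.smul_apply, smul_eq_mul] at h2
    have h3 : (lam j - lam k) * X i j k = (1 - lam i) * X i j k := by
      linear_combination h2
    have h4 := mul_right_cancel₀ hx h3
    linarith
  · intro hmu
    have hid : ∀ i : Fin d, i ≠ 0 →
        Matrix.diagonal lam * X i - X i * Matrix.diagonal lam = (1 - lam i) • X i := by
      intro i hi
      ext j k
      rw [Matrix.sub_apply, Matrix.diagonal_mul, Matrix.mul_diagonal,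
        Matrix.smul_apply, smul_eq_mul]
      by_cases hx : X i j k = 0
      · rw [hx]; ring
      · by_cases hj : j = 0
        · subst hj
          have hki : k = i := by
            by_contra hki
            exact hx (by rw [hXrow i hi k]; simp [hki])
          subst hki
          rw [hlam0]
          ring
        · have hk : k ≠ 0 := by
            intro hk0; subst hk0
            exact hx (hupper _ (hXmem i hi) j 0 (Fin.zero_le j))
          have := hmu i j k hi hj hk hx
          linear_combination (X i j k) * this
    intro Z hZ
    obtain ⟨c, hc⟩ := hXspan Z hZ
    rw [hc]
    have hsum : Matrix.diagonal lam * (∑ l ∈ Finset.univ.erase 0, c l • X l)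
        - (∑ l ∈ Finset.univ.erase 0, c l • X l) * Matrix.diagonal lam
        = ∑ l ∈ Finset.univ.erase 0,
            c l • (Matrix.diagonal lam * X l - X l * Matrix.diagonal lam) := by
      rw [Finset.mul_sum, Finset.sum_mul, ← Finset.sum_sub_distrib]
      refine Finset.sum_congr rfl (fun l hl => ?_)
      rw [mul_smul_comm, smul_mul_assoc, ← smul_sub]
    rw [hsum]
    refine Submodule.sum_mem _ (fun l hl => Submodule.smul_mem _ _ ?_)
    rw [hid l (Finset.ne_of_mem_erase hl)]
    exact Submodule.smul_mem _ _ (hXmem l (Finset.ne_of_mem_erase hl))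
end

section
/- Suppose YX − XY ∈ 𝔰 holds for all X ∈ 𝔰. Then H = {ε·exp(rY)·(I_d + X) : ε ∈ {±1}, r ∈ ℝ, X ∈ 𝔰} is a subgroup of GL(d,ℝ), and the representation of its elements is unique: if ε·exp(rY)·(I_d + X) = ε'·exp(r'Y)·(I_d + X') with ε, ε' ∈ {±1}, r, r' ∈ ℝ and X, X' ∈ 𝔰, then ε = ε', r = r' and X = X'. -/
/-!
Conjugation by `exp (s Y)` multiplies the `(j, k)` entry of a matrix by `exp (s (λ_j - λ_k))`.
Only finitely many differences `λ_j - λ_k` occur, so this entrywise scaling is `q(ad_Y)` for a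
Lagrange interpolating polynomial `q`, and `𝔰` is stable under it because it is stable under
`ad_Y`. Hence `exp (r Y)` normalizes `1 + 𝔰`, which is a group since elements of `𝔰` are nilpotent
and `(1 + Z)⁻¹ = 1 - Z + Z² - ⋯`. Uniqueness: the `(0, 0)` entry of `ε exp (r Y) (1 + Z)` is
`ε eʳ`, which determines `ε` and `r`.
-/

open Matrix

/-- The shearlet dilation group
`H = {ε·exp(rY)·(I_d + X) : ε ∈ {±1}, r ∈ ℝ, X ∈ 𝔰}`, where `Y = diag(1, λ_2, …, λ_d)`. -/
def shearletGroupSet (d : ℕ) (lam : Fin d → ℝ)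
    (𝔰 : Submodule ℝ (Matrix (Fin d) (Fin d) ℝ)) : Set (Matrix (Fin d) (Fin d) ℝ) :=
  {h | ∃ ε r : ℝ, ∃ Z ∈ 𝔰, (ε = 1 ∨ ε = -1) ∧
    h = ε • (NormedSpace.exp (r • Matrix.diagonal lam) * (1 + Z))}

open Polynomial

section DiagonalCommutator

variable {𝕜 ι : Type*} [Field 𝕜] [Fintype ι] [DecidableEq ι]

lemma diagonal_mul_sub_mul_diagonal_apply (lam : ι → 𝕜) (Z : Matrix ι ι 𝕜) (j k : ι) :
    (diagonal lam * Z - Z * diagonal lam) j k = (lam j - lam k) * Z j k := by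
  simp only [Matrix.sub_apply, diagonal_mul, mul_diagonal]
  ring

lemma iterate_diagonal_commutator_apply (lam : ι → 𝕜) (n : ℕ) (Z : Matrix ι ι 𝕜) (j k : ι) :
    ((fun X => diagonal lam * X - X * diagonal lam)^[n] Z) j k = (lam j - lam k) ^ n * Z j k := by
  induction n with
  | zero => simp
  | succ n ih =>
    rw [Function.iterate_succ_apply', diagonal_mul_sub_mul_diagonal_apply, ih, pow_succ']
    ring

lemma iterate_diagonal_commutator_mem {lam : ι → 𝕜} {𝔰 : Submodule 𝕜 (Matrix ι ι 𝕜)}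
    (hcomm : ∀ Z ∈ 𝔰, diagonal lam * Z - Z * diagonal lam ∈ 𝔰) (n : ℕ) {Z : Matrix ι ι 𝕜}
    (hZ : Z ∈ 𝔰) : (fun X => diagonal lam * X - X * diagonal lam)^[n] Z ∈ 𝔰 := by
  induction n with
  | zero => exact hZ
  | succ n ih => exact Function.iterate_succ_apply' _ n Z ▸ hcomm _ ih

lemma of_eval_mul_mem {lam : ι → 𝕜} {𝔰 : Submodule 𝕜 (Matrix ι ι 𝕜)}
    (hcomm : ∀ Z ∈ 𝔰, diagonal lam * Z - Z * diagonal lam ∈ 𝔰) (q : 𝕜[X]) {Z : Matrix ι ι 𝕜}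
    (hZ : Z ∈ 𝔰) : (of fun j k => q.eval (lam j - lam k) * Z j k) ∈ 𝔰 := by
  induction q using Polynomial.induction_on' with
  | add p q hp hq =>
    convert 𝔰.add_mem hp hq using 1
    ext j k
    simp [add_mul]
  | monomial n a =>
    convert 𝔰.smul_mem a (iterate_diagonal_commutator_mem hcomm n hZ) using 1
    ext j k
    simp [iterate_diagonal_commutator_apply, mul_assoc]

lemma of_apply_sub_mul_mem {lam : ι → 𝕜} {𝔰 : Submodule 𝕜 (Matrix ι ι 𝕜)}
    (hcomm : ∀ Z ∈ 𝔰, diagonal lam * Z - Z * diagonal lam ∈ 𝔰) (f : 𝕜 → 𝕜)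
    {Z : Matrix ι ι 𝕜} (hZ : Z ∈ 𝔰) : (of fun j k => f (lam j - lam k) * Z j k) ∈ 𝔰 := by
  classical
  let T := Finset.univ.image fun p : ι × ι => lam p.1 - lam p.2
  convert of_eval_mul_mem hcomm (Lagrange.interpolate T id f) hZ using 4 with j k
  congr 1
  have hnode : lam j - lam k ∈ T := Finset.mem_image.2 ⟨(j, k), Finset.mem_univ _, rfl⟩
  exact (Lagrange.eval_interpolate_at_node f (Set.injOn_id _) hnode).symm

end DiagonalCommutator

lemma pow_card_eq_zero_of_forall_le_eq_zero {R n : Type*} [CommRing R] [Fintype n]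
    [DecidableEq n] [LinearOrder n] {Z : Matrix n n R} (h : ∀ j k, k ≤ j → Z j k = 0) :
    Z ^ Fintype.card n = 0 := by
  have hchar := Z.charpoly_of_isUpperTriangular fun j k hkj => h j k hkj.le
  simpa [hchar, h _ _ le_rfl] using Z.aeval_self_charpoly

lemma exists_mem_one_add_mul_eq_one_of_isNilpotent {R A : Type*} [Ring R] [Ring A]
    [Module R A] {𝔰 : Submodule R A} (hmul : ∀ X ∈ 𝔰, ∀ Y ∈ 𝔰, X * Y ∈ 𝔰) {Z : A}
    (hZ : Z ∈ 𝔰) (hnil : IsNilpotent Z) :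
    ∃ N ∈ 𝔰, (1 + Z) * (1 + N) = 1 ∧ (1 + N) * (1 + Z) = 1 := by
  obtain ⟨n, hn⟩ := hnil
  have hpow : ∀ i : ℕ, (-Z) ^ (i + 1) ∈ 𝔰 := by
    intro i
    induction i with
    | zero => simpa using neg_mem hZ
    | succ i ih => exact pow_succ (-Z) (i + 1) ▸ hmul _ ih _ (neg_mem hZ)
  have hvan : (-Z) ^ (n + 1) = 0 := by rw [pow_succ, neg_pow, hn, mul_zero, zero_mul]
  have hgeom : 1 + ∑ i ∈ Finset.range n, (-Z) ^ (i + 1) = ∑ i ∈ Finset.range (n + 1), (-Z) ^ i := by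
    rw [Finset.sum_range_succ', pow_zero, add_comm]
  refine ⟨∑ i ∈ Finset.range n, (-Z) ^ (i + 1), 𝔰.sum_mem fun i _ => hpow i, ?_, ?_⟩
  · rw [hgeom, ← sub_neg_eq_add, mul_neg_geom_sum, hvan, sub_zero]
  · rw [hgeom, ← sub_neg_eq_add, geom_sum_mul_neg, hvan, sub_zero]

section DiagonalExp

variable {ι : Type*} [Fintype ι] [DecidableEq ι] (lam : ι → ℝ)

lemma exp_smul_diagonal (s : ℝ) :
    NormedSpace.exp (s • diagonal lam) = diagonal fun i => Real.exp (s * lam i) := by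
  rw [← diagonal_smul, exp_diagonal]
  simp [Real.exp_eq_exp_ℝ]

lemma exp_add_smul_diagonal (s t : ℝ) :
    NormedSpace.exp ((s + t) • diagonal lam) =
      NormedSpace.exp (s • diagonal lam) * NormedSpace.exp (t • diagonal lam) := by
  simp only [exp_smul_diagonal, diagonal_mul_diagonal, add_mul, Real.exp_add]

lemma exp_smul_diagonal_mul_exp_neg_smul (s : ℝ) :
    NormedSpace.exp (s • diagonal lam) * NormedSpace.exp ((-s) • diagonal lam) = 1 := by
  rw [← exp_add_smul_diagonal, add_neg_cancel, zero_smul, NormedSpace.exp_zero]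

lemma exp_smul_diagonal_mul_mul_exp_neg_smul (s : ℝ) (Z : Matrix ι ι ℝ) :
    NormedSpace.exp (s • diagonal lam) * Z * NormedSpace.exp ((-s) • diagonal lam) =
      of fun j k => Real.exp (s * (lam j - lam k)) * Z j k := by
  ext j k
  simp only [exp_smul_diagonal, diagonal_mul, mul_diagonal, of_apply]
  rw [mul_right_comm, ← Real.exp_add]
  ring_nf

lemma one_add_mul_exp_smul_diagonal (s : ℝ) (Z : Matrix ι ι ℝ) :
    (1 + Z) * NormedSpace.exp (s • diagonal lam) = NormedSpace.exp (s • diagonal lam) *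
      (1 + NormedSpace.exp ((-s) • diagonal lam) * Z * NormedSpace.exp (s • diagonal lam)) := by
  have hcancel := exp_smul_diagonal_mul_exp_neg_smul lam s
  rw [mul_add, mul_one, add_mul, one_mul, ← mul_assoc, ← mul_assoc, hcancel, one_mul]

lemma exp_smul_diagonal_conj_mem {𝔰 : Submodule ℝ (Matrix ι ι ℝ)}
    (hcomm : ∀ Z ∈ 𝔰, diagonal lam * Z - Z * diagonal lam ∈ 𝔰) (s : ℝ) {Z : Matrix ι ι ℝ}
    (hZ : Z ∈ 𝔰) :
    NormedSpace.exp (s • diagonal lam) * Z * NormedSpace.exp ((-s) • diagonal lam) ∈ 𝔰 := by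
  rw [exp_smul_diagonal_mul_mul_exp_neg_smul]
  exact of_apply_sub_mul_mem hcomm (fun x => Real.exp (s * x)) hZ

end DiagonalExp

section ShearletGroup

variable {d : ℕ} {lam : Fin d → ℝ} {𝔰 : Submodule ℝ (Matrix (Fin d) (Fin d) ℝ)}

lemma one_mem_shearletGroupSet : (1 : Matrix (Fin d) (Fin d) ℝ) ∈ shearletGroupSet d lam 𝔰 :=
  ⟨1, 0, 0, 𝔰.zero_mem, Or.inl rfl, by simp⟩

lemma mul_mem_shearletGroupSet (hmul : ∀ X ∈ 𝔰, ∀ Y ∈ 𝔰, X * Y ∈ 𝔰)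
    (hcomm : ∀ Z ∈ 𝔰, diagonal lam * Z - Z * diagonal lam ∈ 𝔰) {g h : Matrix (Fin d) (Fin d) ℝ}
    (hg : g ∈ shearletGroupSet d lam 𝔰) (hh : h ∈ shearletGroupSet d lam 𝔰) :
    g * h ∈ shearletGroupSet d lam 𝔰 := by
  obtain ⟨ε, r, Z, hZ, hε, rfl⟩ := hg
  obtain ⟨ε', r', Z', hZ', hε', rfl⟩ := hh
  set V := NormedSpace.exp ((-r') • diagonal lam) * Z * NormedSpace.exp (r' • diagonal lam)
  have hV : V ∈ 𝔰 := by simpa only [neg_neg] using exp_smul_diagonal_conj_mem lam hcomm (-r') hZ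
  refine ⟨ε * ε', r + r', V + Z' + V * Z', 𝔰.add_mem (𝔰.add_mem hV hZ') (hmul _ hV _ hZ'),
    by rcases hε with rfl | rfl <;> rcases hε' with rfl | rfl <;> norm_num, ?_⟩
  rw [smul_mul_smul_comm, exp_add_smul_diagonal]
  congr 1
  calc _ = NormedSpace.exp (r • diagonal lam) * ((1 + Z) * NormedSpace.exp (r' • diagonal lam)) *
        (1 + Z') := by noncomm_ring
    _ = NormedSpace.exp (r • diagonal lam) * (NormedSpace.exp (r' • diagonal lam) * (1 + V)) *
        (1 + Z') := by rw [one_add_mul_exp_smul_diagonal]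
    _ = _ := by clear_value V; noncomm_ring

lemma exists_mul_eq_one_of_mem_shearletGroupSet
    (hupper : ∀ X ∈ 𝔰, ∀ j k : Fin d, k ≤ j → X j k = 0)
    (hmul : ∀ X ∈ 𝔰, ∀ Y ∈ 𝔰, X * Y ∈ 𝔰)
    (hcomm : ∀ Z ∈ 𝔰, diagonal lam * Z - Z * diagonal lam ∈ 𝔰) {g : Matrix (Fin d) (Fin d) ℝ}
    (hg : g ∈ shearletGroupSet d lam 𝔰) : ∃ h ∈ shearletGroupSet d lam 𝔰, g * h = 1 := by
  obtain ⟨ε, r, Z, hZ, hε, rfl⟩ := hg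
  obtain ⟨N, hN, hZN, -⟩ := exists_mem_one_add_mul_eq_one_of_isNilpotent hmul hZ
    ⟨_, pow_card_eq_zero_of_forall_le_eq_zero (hupper Z hZ)⟩
  refine ⟨ε • (NormedSpace.exp ((-r) • diagonal lam) * (1 + NormedSpace.exp (r • diagonal lam) *
    N * NormedSpace.exp ((-r) • diagonal lam))),
    ⟨ε, -r, _, exp_smul_diagonal_conj_mem lam hcomm r hN, hε, rfl⟩, ?_⟩
  have hεε : ε * ε = 1 := by rcases hε with rfl | rfl <;> norm_num
  rw [smul_mul_smul_comm, hεε, one_smul]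
  calc _ = NormedSpace.exp (r • diagonal lam) * (1 + Z) *
        ((1 + N) * NormedSpace.exp ((-r) • diagonal lam)) := by
          rw [one_add_mul_exp_smul_diagonal, neg_neg]
    _ = NormedSpace.exp (r • diagonal lam) * ((1 + Z) * (1 + N)) *
        NormedSpace.exp ((-r) • diagonal lam) := by noncomm_ring
    _ = 1 := by rw [hZN, mul_one, exp_smul_diagonal_mul_exp_neg_smul]

lemma inv_mem_shearletGroupSet (hupper : ∀ X ∈ 𝔰, ∀ j k : Fin d, k ≤ j → X j k = 0)
    (hmul : ∀ X ∈ 𝔰, ∀ Y ∈ 𝔰, X * Y ∈ 𝔰)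
    (hcomm : ∀ Z ∈ 𝔰, diagonal lam * Z - Z * diagonal lam ∈ 𝔰) {g : Matrix (Fin d) (Fin d) ℝ}
    (hg : g ∈ shearletGroupSet d lam 𝔰) : g⁻¹ ∈ shearletGroupSet d lam 𝔰 := by
  obtain ⟨h, hh, hgh⟩ := exists_mul_eq_one_of_mem_shearletGroupSet hupper hmul hcomm hg
  rwa [inv_eq_right_inv hgh]

def shearletSubgroup (hupper : ∀ X ∈ 𝔰, ∀ j k : Fin d, k ≤ j → X j k = 0)
    (hmul : ∀ X ∈ 𝔰, ∀ Y ∈ 𝔰, X * Y ∈ 𝔰)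
    (hcomm : ∀ Z ∈ 𝔰, diagonal lam * Z - Z * diagonal lam ∈ 𝔰) : Subgroup (GL (Fin d) ℝ) where
  carrier := {g | (g : Matrix (Fin d) (Fin d) ℝ) ∈ shearletGroupSet d lam 𝔰}
  one_mem' := one_mem_shearletGroupSet
  mul_mem' hg hh := mul_mem_shearletGroupSet hmul hcomm hg hh
  inv_mem' {g} hg := by
    simpa [coe_units_inv] using inv_mem_shearletGroupSet hupper hmul hcomm hg

lemma eq_and_eq_of_mul_exp_eq {ε ε' r r' : ℝ} (hε : ε = 1 ∨ ε = -1) (hε' : ε' = 1 ∨ ε' = -1)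
    (h : ε * Real.exp r = ε' * Real.exp r') : ε = ε' ∧ r = r' := by
  have hε_eq : ε = ε' := by
    rcases hε with rfl | rfl <;> rcases hε' with rfl | rfl <;> first
      | rfl
      | nlinarith [Real.exp_pos r, Real.exp_pos r']
  subst hε_eq
  have hε0 : ε ≠ 0 := by rcases hε with rfl | rfl <;> norm_num
  exact ⟨rfl, Real.exp_injective (mul_left_cancel₀ hε0 h)⟩

lemma shearletGroupSet_repr_unique (hupper : ∀ X ∈ 𝔰, ∀ j k : Fin d, k ≤ j → X j k = 0)
    [NeZero d] (hlam0 : lam 0 = 1) {ε ε' r r' : ℝ} {Z Z' : Matrix (Fin d) (Fin d) ℝ}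
    (hε : ε = 1 ∨ ε = -1) (hε' : ε' = 1 ∨ ε' = -1) (hZ : Z ∈ 𝔰) (hZ' : Z' ∈ 𝔰)
    (h : ε • (NormedSpace.exp (r • diagonal lam) * (1 + Z)) =
      ε' • (NormedSpace.exp (r' • diagonal lam) * (1 + Z'))) :
    ε = ε' ∧ r = r' ∧ Z = Z' := by
  have h00 := congrFun₂ h 0 0
  simp only [Matrix.smul_apply, exp_smul_diagonal, diagonal_mul, Matrix.add_apply, one_apply_eq,
    hupper Z hZ 0 0 le_rfl, hupper Z' hZ' 0 0 le_rfl, add_zero, mul_one, hlam0,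
    smul_eq_mul] at h00
  obtain ⟨rfl, rfl⟩ := eq_and_eq_of_mul_exp_eq hε hε' h00
  have hε0 : ε ≠ 0 := by rcases hε with rfl | rfl <;> norm_num
  have hcancel :
      NormedSpace.exp ((-r) • diagonal lam) * NormedSpace.exp (r • diagonal lam) = 1 := by
    simpa only [neg_neg] using exp_smul_diagonal_mul_exp_neg_smul lam (-r)
  have h' := congrArg (NormedSpace.exp ((-r) • diagonal lam) * ·) (smul_right_injective _ hε0 h)
  simpa only [← mul_assoc, hcancel, one_mul, add_right_inj, true_and] using h'

end ShearletGroup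

theorem statement3_general (d : ℕ) [NeZero d]
    (𝔰 : Submodule ℝ (Matrix (Fin d) (Fin d) ℝ))
    (hupper : ∀ X ∈ 𝔰, ∀ j k : Fin d, k ≤ j → X j k = 0)
    (hmulclosed : ∀ X ∈ 𝔰, ∀ Y ∈ 𝔰, X * Y ∈ 𝔰)
    (lam : Fin d → ℝ) (hlam0 : lam 0 = 1)
    (hcomm : ∀ Z ∈ 𝔰, Matrix.diagonal lam * Z - Z * Matrix.diagonal lam ∈ 𝔰) :
    (∃ H : Subgroup (GL (Fin d) ℝ), ∀ g : GL (Fin d) ℝ,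
      g ∈ H ↔ (g : Matrix (Fin d) (Fin d) ℝ) ∈ shearletGroupSet d lam 𝔰) ∧
    (∀ (ε ε' r r' : ℝ) (Z Z' : Matrix (Fin d) (Fin d) ℝ),
      (ε = 1 ∨ ε = -1) → (ε' = 1 ∨ ε' = -1) → Z ∈ 𝔰 → Z' ∈ 𝔰 →
      ε • (NormedSpace.exp (r • Matrix.diagonal lam) * (1 + Z)) =
        ε' • (NormedSpace.exp (r' • Matrix.diagonal lam) * (1 + Z')) →
      ε = ε' ∧ r = r' ∧ Z = Z') :=
  ⟨⟨shearletSubgroup hupper hmulclosed hcomm, fun _ => Iff.rfl⟩,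
    fun _ _ _ _ _ _ hε hε' hZ hZ' h => shearletGroupSet_repr_unique hupper hlam0 hε hε' hZ hZ' h⟩

/-- If `YX - XY ∈ 𝔰` for all `X ∈ 𝔰`, then
`H = {ε·exp(rY)·(I_d + X) : ε ∈ {±1}, r ∈ ℝ, X ∈ 𝔰}` is a subgroup of `GL(d,ℝ)`, and the
representation of its elements is unique. -/
theorem statement3 (d : ℕ) [NeZero d] (hd : 2 ≤ d)
    (𝔰 : Submodule ℝ (Matrix (Fin d) (Fin d) ℝ))
    (hupper : ∀ X ∈ 𝔰, ∀ j k : Fin d, k ≤ j → X j k = 0)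
    (hmulclosed : ∀ X ∈ 𝔰, ∀ Y ∈ 𝔰, X * Y ∈ 𝔰)
    (lam : Fin d → ℝ) (hlam0 : lam 0 = 1)
    (hcomm : ∀ Z ∈ 𝔰, Matrix.diagonal lam * Z - Z * Matrix.diagonal lam ∈ 𝔰) :
    (∃ H : Subgroup (GL (Fin d) ℝ), ∀ g : GL (Fin d) ℝ,
      g ∈ H ↔ (g : Matrix (Fin d) (Fin d) ℝ) ∈ shearletGroupSet d lam 𝔰) ∧
    (∀ (ε ε' r r' : ℝ) (Z Z' : Matrix (Fin d) (Fin d) ℝ),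
      (ε = 1 ∨ ε = -1) → (ε' = 1 ∨ ε' = -1) → Z ∈ 𝔰 → Z' ∈ 𝔰 →
      ε • (NormedSpace.exp (r • Matrix.diagonal lam) * (1 + Z)) =
        ε' • (NormedSpace.exp (r' • Matrix.diagonal lam) * (1 + Z')) →
      ε = ε' ∧ r = r' ∧ Z = Z') :=
  statement3_general d 𝔰 hupper hmulclosed lam hlam0 hcomm
end

section
/- Let N be a finite-dimensional commutative associative ℝ-algebra (not necessarily unital) of dimension m ≥ 1 in which every element is nilpotent. Then there exists a basis b_1, …, b_m of N such that for every a ∈ N and every i = 1, …, m one has a·b_i ∈ span{b_{i+1}, …, b_m} (where the span of the empty family is {0}); that is, N admits a Jordan–Hölder basis. -/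
/-!
Inside the unitization `K ⊕ N`, a commutative Noetherian ring, every element of `N` is
nilpotent, so `N` lies in the nilradical, which is a nilpotent ideal. If a proper subspace `S`
contained no `x ∉ S` with `N·x ⊆ S`, multiplying repeatedly by suitable elements of `N` would
produce elements outside `S` in every power of the nilradical, including the zero ideal. Such
vectors `x`, prepended one at a time to a linearly independent family, build the basis from
the back.
-/

open Module Submodule

section TriangularBasis

variable {K V ι : Type*} [DivisionRing K] [AddCommGroup V] [Module K V]

theorem exists_linearIndependent_strictlyTriangular (T : ι → V → V)
    (hT : ∀ S : Submodule K V, S ≠ ⊤ → ∃ x ∉ S, ∀ t, T t x ∈ S) :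
    ∀ n ≤ finrank K V, ∃ b : Fin n → V, LinearIndependent K b ∧
      ∀ t i, T t (b i) ∈ span K {x | ∃ j, i < j ∧ x = b j} := by
  intro n
  induction n with
  | zero => exact fun _ => ⟨Fin.elim0, linearIndependent_empty_type, fun _ i => i.elim0⟩
  | succ n ih =>
    intro hn
    obtain ⟨b, hb, hbT⟩ := ih (by omega)
    have hspan : span K (Set.range b) ≠ ⊤ := by
      intro htop
      have := finrank_span_eq_card hb
      rw [htop, finrank_top, Fintype.card_fin] at this
      omega
    obtain ⟨x, hx, hxT⟩ := hT _ hspan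
    refine ⟨Fin.cons x b, linearIndependent_finCons.2 ⟨hb, hx⟩, fun t i => ?_⟩
    cases i using Fin.cases with
    | zero =>
      refine span_mono ?_ (hxT t)
      rintro _ ⟨j, rfl⟩
      exact ⟨j.succ, j.succ_pos, by simp⟩
    | succ i =>
      rw [Fin.cons_succ]
      refine span_mono ?_ (hbT t i)
      rintro _ ⟨j, hij, rfl⟩
      exact ⟨j.succ, Fin.succ_lt_succ_iff.2 hij, by simp⟩

theorem exists_basis_strictlyTriangular [FiniteDimensional K V] (T : ι → V → V)
    (hT : ∀ S : Submodule K V, S ≠ ⊤ → ∃ x ∉ S, ∀ t, T t x ∈ S) :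
    ∃ B : Basis (Fin (finrank K V)) K V, ∀ t i,
      T t (B i) ∈ span K {x | ∃ j, i < j ∧ x = B j} := by
  obtain ⟨b, hb, hbT⟩ := exists_linearIndependent_strictlyTriangular T hT _ le_rfl
  refine ⟨basisOfLinearIndependentOfCardEqFinrank' b hb (Fintype.card_fin _), ?_⟩
  simpa only [coe_basisOfLinearIndependentOfCardEqFinrank'] using hbT

end TriangularBasis

theorem Unitization.inr_pow_succ {R A : Type*} [CommSemiring R] [NonUnitalSemiring A] [Module R A]
    [IsScalarTower R A A] [SMulCommClass R A A] (a : A) (n : ℕ) :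
    (a : Unitization R A) ^ (n + 1) = ((a * ·)^[n] a : A) := by
  induction n with
  | zero => simp
  | succ n ih => rw [pow_succ', ih, ← inr_mul, Function.iterate_succ_apply']

theorem exists_notMem_forall_mul_mem {K N : Type*} [Field K] [NonUnitalCommRing N] [Module K N]
    [SMulCommClass K N N] [IsScalarTower K N N] [FiniteDimensional K N]
    (hnil : ∀ a : N, ∃ n : ℕ, (a * ·)^[n] a = 0) {S : Submodule K N} (hS : S ≠ ⊤) :
    ∃ x ∉ S, ∀ a, a * x ∈ S := by
  have : Module.Finite K (Unitization K N) :=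
    Module.Finite.equiv (Unitization.linearEquiv K K N).symm
  have : IsNoetherianRing (Unitization K N) := isNoetherian_of_tower K inferInstance
  obtain ⟨s, hs⟩ := IsNoetherianRing.isNilpotent_nilradical (Unitization K N)
  have hJ (a : N) : (a : Unitization K N) ∈ nilradical _ := by
    obtain ⟨n, hn⟩ := hnil a
    exact mem_nilradical.2 ⟨n + 1, by rw [Unitization.inr_pow_succ, hn, Unitization.inr_zero]⟩
  by_contra! hS_ann
  have hpow (k : ℕ) : ∃ x ∉ S, (x : Unitization K N) ∈ nilradical _ ^ k := by
    induction k with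
    | zero =>
      obtain ⟨x, -, hx⟩ := SetLike.exists_of_lt hS.lt_top
      exact ⟨x, hx, by simp⟩
    | succ k ih =>
      obtain ⟨x, hx, hxk⟩ := ih
      obtain ⟨a, ha⟩ := hS_ann x hx
      refine ⟨a * x, ha, ?_⟩
      rw [Unitization.inr_mul, pow_succ']
      exact Ideal.mul_mem_mul (hJ a) hxk
  obtain ⟨x, hx, hxs⟩ := hpow s
  rw [hs, Ideal.zero_eq_bot, Ideal.mem_bot, ← Unitization.inr_zero, Unitization.inr_inj] at hxs
  exact hx (hxs ▸ S.zero_mem)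

theorem statement7_general (m : ℕ)
    (N : Type*) [NonUnitalCommRing N] [Module ℝ N]
    [SMulCommClass ℝ N N] [IsScalarTower ℝ N N]
    [FiniteDimensional ℝ N] (hdim : Module.finrank ℝ N = m)
    (hnil : ∀ a : N, ∃ n : ℕ, (fun x => a * x)^[n] a = 0) :
    ∃ B : Module.Basis (Fin m) ℝ N, ∀ a : N, ∀ i : Fin m,
      a * B i ∈ Submodule.span ℝ {x : N | ∃ j : Fin m, i < j ∧ x = B j} := by
  subst hdim
  exact exists_basis_strictlyTriangular (fun a x => a * x)
    fun _ hS => exists_notMem_forall_mul_mem hnil hS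

/-- Every finite-dimensional commutative associative ℝ-algebra
(not necessarily unital) of dimension `m ≥ 1` in which every element is nilpotent
admits a Jordan–Hölder basis `b_1, …, b_m`: for every `a ∈ N` and every `i`,
`a·b_i ∈ span{b_{i+1}, …, b_m}`.  (Nilpotency of `a` is expressed as
`a * (a * (⋯ * a)) = 0` for some number of factors, via iteration of `x ↦ a * x`.) -/
theorem statement7 (m : ℕ) (hm : 1 ≤ m)
    (N : Type*) [NonUnitalCommRing N] [Module ℝ N]
    [SMulCommClass ℝ N N] [IsScalarTower ℝ N N]
    [FiniteDimensional ℝ N] (hdim : Module.finrank ℝ N = m)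
    (hnil : ∀ a : N, ∃ n : ℕ, (fun x => a * x)^[n] a = 0) :
    ∃ B : Module.Basis (Fin m) ℝ N, ∀ a : N, ∀ i : Fin m,
      a * B i ∈ Submodule.span ℝ {x : N | ∃ j : Fin m, i < j ∧ x = B j} :=
  statement7_general m N hdim hnil
end

section
/- For every upper triangular matrix h ∈ M_d(ℝ) (i.e. h_{i,j} = 0 for all i > j) and every b ∈ ℝ^d, one has h σ_b h^T = h_{1,1} · σ_{hb}. -/
open Matrix

/-- The symmetric matrix `σ_b` with `(σ_b)_{1,1} = b_1`,
`(σ_b)_{1,j} = (σ_b)_{j,1} = b_j/2` for `j ≥ 2`, and all other entries zero. -/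
noncomputable def sigmaMat (d : ℕ) [NeZero d] (b : Fin d → ℝ) : Matrix (Fin d) (Fin d) ℝ :=
  Matrix.of fun i j =>
    if i = 0 ∧ j = 0 then b 0
    else if i = 0 then b j / 2
    else if j = 0 then b i / 2
    else 0

lemma sigmaMat_eq (d : ℕ) [NeZero d] (b : Fin d → ℝ) :
    sigmaMat d b = (1/2 : ℝ) •
      (vecMulVec b (Pi.single 0 1) + vecMulVec (Pi.single 0 1) b) := by
  ext i j
  simp only [sigmaMat, of_apply, Matrix.smul_apply, Matrix.add_apply, vecMulVec_apply,
    smul_eq_mul]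
  by_cases hi : i = 0 <;> by_cases hj : j = 0 <;>
    simp [hi, hj, Pi.single_apply] <;> ring

lemma conj_vecMulVec (d : ℕ) (h : Matrix (Fin d) (Fin d) ℝ) (u v : Fin d → ℝ) :
    h * vecMulVec u v * hᵀ = vecMulVec (h.mulVec u) (h.mulVec v) := by
  ext i j
  simp only [mul_apply, vecMulVec_apply, transpose_apply, mulVec, dotProduct,
    Finset.sum_mul, Finset.mul_sum]
  exact Finset.sum_congr rfl fun l _ => Finset.sum_congr rfl fun k _ => by ring

/-- For every upper triangular `h ∈ M_d(ℝ)` and every `b ∈ ℝ^d`,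
`h σ_b hᵀ = h_{1,1} · σ_{hb}`. -/
theorem statement12 (d : ℕ) [NeZero d]
    (h : Matrix (Fin d) (Fin d) ℝ)
    (hupper : ∀ i j : Fin d, j < i → h i j = 0)
    (b : Fin d → ℝ) :
    h * sigmaMat d b * hᵀ = h 0 0 • sigmaMat d (h.mulVec b) := by
  have he : h.mulVec (Pi.single 0 1) = h 0 0 • (Pi.single 0 1 : Fin d → ℝ) := by
    funext i
    simp only [mulVec_single, Pi.smul_apply, smul_eq_mul, mul_one]
    by_cases hi : i = 0
    · subst hi; simp
    · have : (0 : Fin d) < i := lt_of_le_of_ne (Fin.zero_le i) (Ne.symm hi)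
      simp [hupper i 0 this, Pi.single_apply, hi]
  rw [sigmaMat_eq, sigmaMat_eq, Matrix.mul_smul, Matrix.smul_mul, Matrix.mul_add,
    Matrix.add_mul, conj_vecMulVec, conj_vecMulVec, he]
  ext i j
  simp only [Matrix.smul_apply, Matrix.add_apply, vecMulVec_apply, Pi.smul_apply,
    smul_eq_mul]
  ring
end
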